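/- arXiv:1507.00881 — 2 statements merged into one kernel-verified Lean document; each statement's English description precedes it below -/
import Mathlib

section
/- For every k ≥ 5, the strong metric dimension of the generalized Petersen graph GP(4k,2) equals 5k. -/
/-!
Strong resolving sets are exactly the vertex covers of the graph of mutually maximally distant
(MMD) pairs, so the strong metric dimension is `|V|` minus the size of a largest set containing no
MMD pair; this size is `|ι|` whenever `ι` indexes both an MMD-free family of vertices and a cover
of `V` by sets of pairwise MMD vertices.

For even `n`, the distance in `GP(n,2)` between two vertices depends only on their sides and on
the circular distance `m` of their indices. For `n = 4k`, this formula shows that `u_i, u_j` are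
MMD when `m ∈ {5, 2k - 5, 2k}` and `v_i, v_j` are MMD when `m = 2k - 1`, so `V` is covered by the
`k` sets `{u_{2t}, u_{2t+5}, u_{2t+2k}, u_{2t+2k+5}}` and the `2k` sets `{v_{2t}, v_{2t+2k+1}}`.
On the other hand no two of the `3k` vertices `u_{2t}` (`t < k`) and `v_{2t}` (`t < 2k`) are MMD:
their circular distances are even, and from one of them there is always a step that moves
further away from the other. Hence the strong metric dimension is `8k - 3k = 5k`.
-/

/-- A vertex `w` strongly resolves vertices `u` and `v` in graph `G`:
`u` lies on a shortest `v`–`w` path or `v` lies on a shortest `u`–`w` path,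
equivalently via distances. -/
def StronglyResolves {V : Type*} (G : SimpleGraph V) (w u v : V) : Prop :=
  G.dist w u = G.dist w v + G.dist v u ∨ G.dist w v = G.dist w u + G.dist u v

/-- `S` is a strong resolving set of `G`. -/
def IsStrongResolvingSet {V : Type*} (G : SimpleGraph V) (S : Set V) : Prop :=
  ∀ u v : V, u ≠ v → ∃ w ∈ S, StronglyResolves G w u v

/-- The strong metric dimension: minimum cardinality of a strong resolving set. -/
noncomputable def sdim {V : Type*} (G : SimpleGraph V) : ℕ :=
  sInf {m : ℕ | ∃ S : Set V, IsStrongResolvingSet G S ∧ S.ncard = m}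

/-- Mutually maximally distant vertices. -/
def MutuallyMaximallyDistant {V : Type*} (G : SimpleGraph V) (u v : V) : Prop :=
  u ≠ v ∧ (∀ w : V, G.Adj u w → G.dist w v ≤ G.dist u v) ∧
    (∀ w : V, G.Adj v w → G.dist u w ≤ G.dist u v)

/-- The generalized Petersen graph `GP n k`, with outer vertices `Sum.inl i` (the `uᵢ`)
and inner vertices `Sum.inr i` (the `vᵢ`), indices in `ZMod n`. -/
def GP (n k : ℕ) : SimpleGraph (ZMod n ⊕ ZMod n) where
  Adj x y := match x, y with
    | Sum.inl i, Sum.inl j => i ≠ j ∧ (j = i + 1 ∨ i = j + 1)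
    | Sum.inl i, Sum.inr j => i = j
    | Sum.inr i, Sum.inl j => i = j
    | Sum.inr i, Sum.inr j => i ≠ j ∧ (j = i + (k : ZMod n) ∨ i = j + (k : ZMod n))
  symm := ⟨by rintro (i|i) (j|j) h <;> simp_all <;> tauto⟩
  loopless := ⟨by rintro (i|i) h <;> simp_all⟩

open SimpleGraph Function

namespace SimpleGraph

variable {V : Type*} {G : SimpleGraph V}

lemma dist_le_dist_add_one_of_adj {u v w : V} (h : G.Adj v w) : G.dist u w ≤ G.dist u v + 1 := by
  rcases h.diff_dist_adj (u := u) with h | h | h <;> omega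

lemma Connected.exists_adj_dist_add_one (hG : G.Connected) {x y : V} (hne : x ≠ y) :
    ∃ z, G.Adj y z ∧ G.dist x z + 1 = G.dist x y := by
  obtain ⟨p, hp⟩ := hG.exists_walk_length_eq_dist y x
  cases p with
  | nil => exact absurd rfl hne
  | cons h q =>
    refine ⟨_, h, le_antisymm ?_ (dist_le_dist_add_one_of_adj h.symm)⟩
    rw [dist_comm, dist_comm (u := x), ← hp, Walk.length_cons]
    exact Nat.add_le_add_right (dist_le q) 1

lemma Walk.le_add_length_of_lipschitz {g : V → ℕ} (hg : ∀ y z, G.Adj y z → g z ≤ g y + 1)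
    {u w : V} (p : G.Walk u w) : g w ≤ g u + p.length := by
  induction p with
  | nil => simp
  | cons h _ ih => have := hg _ _ h; rw [Walk.length_cons]; omega

lemma exists_walk_length_le_of_descent {g : V → ℕ} {x : V}
    (hg : ∀ y, y ≠ x → ∃ z, G.Adj y z ∧ g z < g y) (y : V) :
    ∃ p : G.Walk x y, p.length ≤ g y := by
  induction hy : g y using Nat.strong_induction_on generalizing y with
  | _ N ih =>
    by_cases hxy : y = x
    · subst hxy; exact ⟨.nil, Nat.zero_le _⟩
    · obtain ⟨z, hyz, hlt⟩ := hg y hxy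
      obtain ⟨p, hp⟩ := ih _ (hy ▸ hlt) z rfl
      exact ⟨p.concat hyz.symm, by rw [Walk.length_concat]; omega⟩

lemma dist_eq_of_lipschitz_of_descent {g : V → ℕ} {x : V} (hx : g x = 0)
    (hlip : ∀ y z, G.Adj y z → g z ≤ g y + 1)
    (hdesc : ∀ y, y ≠ x → ∃ z, G.Adj y z ∧ g z < g y) (y : V) : G.dist x y = g y := by
  obtain ⟨p, hp⟩ := exists_walk_length_le_of_descent hdesc y
  obtain ⟨q, hq⟩ := p.reachable.exists_walk_length_eq_dist
  have := q.le_add_length_of_lipschitz hlip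
  exact le_antisymm ((dist_le p).trans hp) (by omega)

/-- Push `u` away from `v`, keeping `u` on a shortest path from `v`, as far as possible. -/
lemma Connected.exists_dist_eq_add_of_forall_adj [Finite V] (hG : G.Connected)
    (u v : V) :
    ∃ u', G.dist v u' = G.dist v u + G.dist u u' ∧
      ∀ w, G.Adj u' w → G.dist v w ≤ G.dist v u' := by
  obtain ⟨u', hu', hmax⟩ := Set.exists_max_image {x | G.dist v x = G.dist v u + G.dist u x}
    (G.dist v) (Set.toFinite _) ⟨u, by simp⟩
  refine ⟨u', hu', fun w hw => ?_⟩
  by_contra! hlt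
  have hu'' : G.dist v u' = G.dist v u + G.dist u u' := hu'
  have h1 := dist_le_dist_add_one_of_adj (u := v) hw
  have h2 := hG.dist_triangle (u := v) (v := u) (w := w)
  have h3 := hG.dist_triangle (u := u) (v := u') (w := w)
  have h4 : G.dist u' w = 1 := dist_eq_one_iff_adj.mpr hw
  have := hmax w (show G.dist v w = G.dist v u + G.dist u w by omega)
  omega

end SimpleGraph

section StrongResolving

variable {V : Type*} {G : SimpleGraph V}

lemma MutuallyMaximallyDistant.symm {u v : V} (h : MutuallyMaximallyDistant G u v) :
    MutuallyMaximallyDistant G v u := by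
  obtain ⟨hne, hu, hv⟩ := h
  exact ⟨hne.symm, fun w hw => by simpa only [dist_comm] using hv w hw,
    fun w hw => by simpa only [dist_comm] using hu w hw⟩

lemma MutuallyMaximallyDistant.of_forall_adj {u v : V} (hne : u ≠ v)
    (hu : ∀ w, G.Adj u w → G.dist v w ≤ G.dist v u)
    (hv : ∀ w, G.Adj v w → G.dist u w ≤ G.dist u v) : MutuallyMaximallyDistant G u v :=
  ⟨hne, fun w hw => by simpa only [dist_comm] using hu w hw, hv⟩

/-- Only `u` or `v` itself can strongly resolve a mutually maximally distant pair. -/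
lemma IsStrongResolvingSet.mem_or_mem (hG : G.Connected) {S : Set V}
    (hS : IsStrongResolvingSet G S) {u v : V} (h : MutuallyMaximallyDistant G u v) :
    u ∈ S ∨ v ∈ S := by
  obtain ⟨hne, hu, hv⟩ := h
  obtain ⟨w, hwS, hres⟩ := hS u v hne
  by_cases hwu : w = u
  · exact .inl (hwu ▸ hwS)
  by_cases hwv : w = v
  · exact .inr (hwv ▸ hwS)
  exfalso
  rcases hres with hres | hres
  · obtain ⟨z, hvz, hz⟩ := hG.exists_adj_dist_add_one hwv
    have := hv z hvz
    have := hG.dist_triangle (u := w) (v := z) (w := u)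
    rw [dist_comm (u := z), dist_comm (u := v)] at *
    omega
  · obtain ⟨z, huz, hz⟩ := hG.exists_adj_dist_add_one hwu
    have := hu z huz
    have := hG.dist_triangle (u := w) (v := z) (w := v)
    omega

lemma isStrongResolvingSet_of_forall_mutuallyMaximallyDistant [Finite V] (hG : G.Connected)
    {S : Set V} (hS : ∀ u v, MutuallyMaximallyDistant G u v → u ∈ S ∨ v ∈ S) :
    IsStrongResolvingSet G S := by
  intro u v hne
  obtain ⟨u', hu', hu'max⟩ := hG.exists_dist_eq_add_of_forall_adj u v
  obtain ⟨v', hv', hv'max⟩ := hG.exists_dist_eq_add_of_forall_adj v u'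
  have huv := hG.pos_dist_of_ne hne
  have h1 := hG.dist_triangle (u := v') (v := v) (w := u)
  have h2 := hG.dist_triangle (u := u') (v := u) (w := v')
  have hmmd : MutuallyMaximallyDistant G u' v' := by
    refine .of_forall_adj (fun h => ?_) (fun w hw => ?_) hv'max
    · subst h
      simp only [SimpleGraph.dist_self, dist_comm] at hv' hu'
      omega
    · have := hu'max w hw
      have := hG.dist_triangle (u := v') (v := v) (w := w)
      simp only [dist_comm] at *
      omega
  rcases hS u' v' hmmd with h | h
  · exact ⟨u', h, .inr (by simp only [dist_comm] at *; omega)⟩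
  · exact ⟨v', h, .inl (by simp only [dist_comm] at *; omega)⟩

lemma IsStrongResolvingSet.ncard_compl_le {ι : Type*} [Finite ι] (hG : G.Connected) {S : Set V}
    (hS : IsStrongResolvingSet G S) {C : ι → Set V}
    (hC : ∀ t, (C t).Pairwise (MutuallyMaximallyDistant G)) (hcover : ∀ x, ∃ t, x ∈ C t) :
    Sᶜ.ncard ≤ Nat.card ι := by
  choose c hc using hcover
  have hinj : Set.InjOn c Sᶜ := fun x hx y hy hxy => by
    by_contra hne
    exact (hS.mem_or_mem hG (hC _ (hc x) (hxy ▸ hc y) hne)).elim hx hy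
  rw [← hinj.ncard_image]
  exact Set.ncard_le_card _

lemma isStrongResolvingSet_compl_range [Finite V] (hG : G.Connected) {ι : Type*} {f : ι → V}
    (hf : Pairwise fun s t => ¬ MutuallyMaximallyDistant G (f s) (f t)) :
    IsStrongResolvingSet G (Set.range f)ᶜ := by
  refine isStrongResolvingSet_of_forall_mutuallyMaximallyDistant hG fun u v h => ?_
  rw [Set.mem_compl_iff, Set.mem_compl_iff, ← not_and_or]
  rintro ⟨⟨s, rfl⟩, ⟨t, rfl⟩⟩
  exact hf (fun hst => h.1 (congrArg f hst)) h

theorem sdim_add_card_eq [Finite V] {ι : Type*} [Finite ι] (hG : G.Connected) {f : ι → V}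
    (hf : Injective f) (hindep : Pairwise fun s t => ¬ MutuallyMaximallyDistant G (f s) (f t))
    {C : ι → Set V} (hC : ∀ t, (C t).Pairwise (MutuallyMaximallyDistant G))
    (hcover : ∀ x, ∃ t, x ∈ C t) : sdim G + Nat.card ι = Nat.card V := by
  have hrange := Set.ncard_add_ncard_compl (Set.range f)
  rw [Set.ncard_range_of_injective hf] at hrange
  have hmem : Nat.card V - Nat.card ι ∈
      {m | ∃ S : Set V, IsStrongResolvingSet G S ∧ S.ncard = m} :=
    ⟨_, isStrongResolvingSet_compl_range hG hindep, by omega⟩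
  have hsdim : sdim G = Nat.card V - Nat.card ι := by
    refine le_antisymm (Nat.sInf_le hmem) (le_csInf ⟨_, hmem⟩ ?_)
    rintro _ ⟨S, hS, rfl⟩
    have := Set.ncard_add_ncard_compl S
    have := hS.ncard_compl_le hG hC hcover
    omega
  omega

end StrongResolving

namespace GP

open Sum

section CycDist

variable {n : ℕ}

def cycDist (d : ZMod n) : ℕ := min d.val (n - d.val)

lemma cycDist_zero : cycDist (0 : ZMod n) = 0 := by simp [cycDist]

lemma two_mul_cycDist_le (d : ZMod n) : 2 * cycDist d ≤ n := by
  unfold cycDist; omega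

lemma cycDist_natCast {c : ℕ} (hc : c < n) : cycDist (c : ZMod n) = min c (n - c) := by
  simp [cycDist, ZMod.val_natCast_of_lt hc]

variable [NeZero n]

lemma val_add_cases (a b : ZMod n) :
    (a + b).val = a.val + b.val ∨ (a + b).val + n = a.val + b.val := by
  rcases lt_or_ge (a.val + b.val) n with h | h
  · exact .inl (ZMod.val_add_of_lt h)
  · have := a.val_lt
    have := b.val_lt
    rw [ZMod.val_add_of_le h]
    omega

lemma cycDist_eq_zero {d : ZMod n} : cycDist d = 0 ↔ d = 0 := by
  have := d.val_lt
  rw [← ZMod.val_eq_zero, cycDist]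
  omega

lemma cycDist_neg (d : ZMod n) : cycDist (-d) = cycDist d := by
  have := d.val_lt
  unfold cycDist
  rw [ZMod.neg_val]
  split_ifs with h
  · simp [h]
  · omega

lemma cycDist_sub_comm (a b : ZMod n) : cycDist (a - b) = cycDist (b - a) := by
  rw [← neg_sub, cycDist_neg]

lemma cycDist_add_le (a b : ZMod n) : cycDist (a + b) ≤ cycDist a + cycDist b := by
  have := val_add_cases a b
  have := a.val_lt
  have := b.val_lt
  have := (a + b).val_lt
  unfold cycDist
  omega

lemma cycDist_add_mod_two (hn : Even n) (a b : ZMod n) :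
    cycDist (a + b) % 2 = (cycDist a + cycDist b) % 2 := by
  have := Nat.even_iff.mp hn
  have := val_add_cases a b
  have := a.val_lt
  have := b.val_lt
  have := (a + b).val_lt
  unfold cycDist
  omega

lemma cycDist_sub_triangle (hn : Even n) (p a b : ZMod n) :
    cycDist (b - p) ≤ cycDist (a - p) + cycDist (b - a) ∧
      cycDist (a - p) ≤ cycDist (b - p) + cycDist (b - a) ∧
      (cycDist (b - p) + cycDist (a - p) + cycDist (b - a)) % 2 = 0 := by
  have hb : b - p = (a - p) + (b - a) := by ring
  have ha : a - p = (b - p) + (a - b) := by ring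
  have h1 := cycDist_add_le (a - p) (b - a)
  have h2 := cycDist_add_le (b - p) (a - b)
  have h3 := cycDist_add_mod_two hn (a - p) (b - a)
  rw [← hb] at h1 h3
  rw [← ha, cycDist_sub_comm a b] at h2
  omega

lemma cycDist_natCast_sub_natCast {a b : ℕ} (ha : a < n) (hb : b < n) :
    cycDist ((b : ZMod n) - (a : ZMod n)) = min (max a b - min a b) (n - (max a b - min a b)) := by
  have h := val_add_cases ((b : ZMod n) - (a : ZMod n)) a
  have := ((b : ZMod n) - (a : ZMod n)).val_lt
  rw [sub_add_cancel, ZMod.val_natCast_of_lt ha, ZMod.val_natCast_of_lt hb] at h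
  unfold cycDist
  omega

lemma exists_cycDist_add_eq_sub (c : ℕ) {d : ZMod n} (h : c ≤ cycDist d) :
    ∃ ε : ZMod n, (ε = c ∨ ε = -c) ∧ cycDist (d + ε) + c = cycDist d := by
  have := two_mul_cycDist_le d
  have hc : (c : ZMod n).val = c := ZMod.val_natCast_of_lt (by have := NeZero.pos n; omega)
  have hadd := val_add_cases d (c : ZMod n)
  have hsub := val_add_cases (d - (c : ZMod n)) (c : ZMod n)
  rw [sub_add_cancel] at hsub
  have := d.val_lt
  have := (d + c).val_lt
  have := (d - (c : ZMod n)).val_lt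
  unfold cycDist at *
  by_cases hd : d.val ≤ n - d.val
  · exact ⟨-c, .inr rfl, by rw [← sub_eq_add_neg]; omega⟩
  · exact ⟨c, .inl rfl, by omega⟩

lemma exists_cycDist_add_eq_add (c : ℕ) {d : ZMod n} (h : 2 * (cycDist d + c) ≤ n) :
    ∃ ε : ZMod n, (ε = c ∨ ε = -c) ∧ cycDist (d + ε) = cycDist d + c := by
  have hc : (c : ZMod n).val = c := ZMod.val_natCast_of_lt (by have := NeZero.pos n; omega)
  have hadd := val_add_cases d (c : ZMod n)
  have hsub := val_add_cases (d - (c : ZMod n)) (c : ZMod n)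
  rw [sub_add_cancel] at hsub
  have := d.val_lt
  have := (d + c).val_lt
  have := (d - (c : ZMod n)).val_lt
  unfold cycDist at *
  by_cases hd : d.val ≤ n - d.val
  · exact ⟨c, .inl rfl, by omega⟩
  · exact ⟨-c, .inr rfl, by rw [← sub_eq_add_neg]; omega⟩

end CycDist

section Distance

variable {n : ℕ}

/-- The distance in `GP n 2`, `n` even, as a function of the circular distance `m` of the indices:
go along the outer cycle, or use inner jumps of length two, with one outer step and two spokes
to correct the parity where needed. -/
def gpDist (n : ℕ) : ZMod n ⊕ ZMod n → ZMod n ⊕ ZMod n → ℕ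
  | inl i, inl j => min (cycDist (j - i)) (cycDist (j - i) / 2 + 2 + cycDist (j - i) % 2)
  | inl i, inr j | inr i, inl j => cycDist (j - i) / 2 + 1 + cycDist (j - i) % 2
  | inr i, inr j => cycDist (j - i) / 2 + 3 * (cycDist (j - i) % 2)

lemma gpDist_self (x : ZMod n ⊕ ZMod n) : gpDist n x x = 0 := by
  rcases x with i | i <;> simp [gpDist, cycDist_zero]

lemma adj_inl_add {c : ℕ} (hn : 2 ≤ n) (a : ZMod n) {ε : ZMod n} (hε : ε = 1 ∨ ε = -1) :
    (GP n c).Adj (inl a) (inl (a + ε)) := by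
  have : Fact (1 < n) := ⟨hn⟩
  refine ⟨fun h => ?_, ?_⟩
  · rcases hε with rfl | rfl <;> simp at h
  · rcases hε with rfl | rfl
    · exact .inl rfl
    · exact .inr (by ring)

lemma adj_inr_add (hn : 3 ≤ n) (a : ZMod n) {ε : ZMod n}
    (hε : ε = ((2 : ℕ) : ZMod n) ∨ ε = -((2 : ℕ) : ZMod n)) :
    (GP n 2).Adj (inr a) (inr (a + ε)) := by
  have h2 : ((2 : ℕ) : ZMod n) ≠ 0 := by
    rw [Ne, ZMod.natCast_eq_zero_iff]
    exact fun h => by have := Nat.le_of_dvd two_pos h; omega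
  refine ⟨fun h => ?_, ?_⟩
  · rcases hε with rfl | rfl <;> simp_all
  · rcases hε with rfl | rfl
    · exact .inl rfl
    · exact .inr (by ring)

variable [NeZero n]

lemma cycDist_sub_of_adj_inl {c : ℕ} (hn : 2 ≤ n) {a b : ZMod n}
    (h : (GP n c).Adj (inl a) (inl b)) : cycDist (b - a) = 1 := by
  have h1 : cycDist ((1 : ℕ) : ZMod n) = 1 := by rw [cycDist_natCast (by omega)]; omega
  obtain ⟨-, rfl | rfl⟩ := h
  · simpa using h1
  · rw [sub_add_cancel_left, cycDist_neg]
    simpa using h1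

lemma cycDist_sub_of_adj_inr (hn : 4 ≤ n) {a b : ZMod n}
    (h : (GP n 2).Adj (inr a) (inr b)) : cycDist (b - a) = 2 := by
  have h2 : cycDist ((2 : ℕ) : ZMod n) = 2 := by rw [cycDist_natCast (by omega)]; omega
  obtain ⟨-, rfl | rfl⟩ := h
  · rwa [add_sub_cancel_left]
  · rwa [sub_add_cancel_left, cycDist_neg]

lemma exists_adj_inl_cycDist_eq_sub {c : ℕ} {p a : ZMod n} (h : 1 ≤ cycDist (a - p)) :
    ∃ b, (GP n c).Adj (inl a) (inl b) ∧ cycDist (b - p) + 1 = cycDist (a - p) := by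
  have := two_mul_cycDist_le (a - p)
  obtain ⟨ε, hε, hd⟩ := exists_cycDist_add_eq_sub 1 h
  exact ⟨_, adj_inl_add (by omega) a (by simpa using hε), by rwa [add_sub_right_comm]⟩

lemma exists_adj_inl_cycDist_eq_add {c : ℕ} {p a : ZMod n} (h : 2 * (cycDist (a - p) + 1) ≤ n) :
    ∃ b, (GP n c).Adj (inl a) (inl b) ∧ cycDist (b - p) = cycDist (a - p) + 1 := by
  obtain ⟨ε, hε, hd⟩ := exists_cycDist_add_eq_add 1 h
  exact ⟨_, adj_inl_add (by omega) a (by simpa using hε), by rwa [add_sub_right_comm]⟩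

lemma exists_adj_inr_cycDist_eq_sub {p a : ZMod n} (h : 2 ≤ cycDist (a - p)) :
    ∃ b, (GP n 2).Adj (inr a) (inr b) ∧ cycDist (b - p) + 2 = cycDist (a - p) := by
  have := two_mul_cycDist_le (a - p)
  obtain ⟨ε, hε, hd⟩ := exists_cycDist_add_eq_sub 2 h
  exact ⟨_, adj_inr_add (by omega) a hε, by rwa [add_sub_right_comm]⟩

lemma exists_adj_inr_cycDist_eq_add {p a : ZMod n} (h : 2 * (cycDist (a - p) + 2) ≤ n) :
    ∃ b, (GP n 2).Adj (inr a) (inr b) ∧ cycDist (b - p) = cycDist (a - p) + 2 := by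
  obtain ⟨ε, hε, hd⟩ := exists_cycDist_add_eq_add 2 h
  exact ⟨_, adj_inr_add (by omega) a hε, by rwa [add_sub_right_comm]⟩

lemma gpDist_le_of_adj (hn : Even n) (h4 : 4 ≤ n) (x : ZMod n ⊕ ZMod n)
    {y z : ZMod n ⊕ ZMod n} (h : (GP n 2).Adj y z) : gpDist n x z ≤ gpDist n x y + 1 := by
  rcases x with p | p <;> rcases y with a | a <;> rcases z with b | b
  all_goals try (obtain rfl : a = b := h; simp only [gpDist]; omega)
  all_goals have := cycDist_sub_triangle hn p a b
  · have := cycDist_sub_of_adj_inl (by omega) h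
    simp only [gpDist]
    omega
  · have := cycDist_sub_of_adj_inr h4 h
    simp only [gpDist]
    omega
  · have := cycDist_sub_of_adj_inl (by omega) h
    simp only [gpDist]
    omega
  · have := cycDist_sub_of_adj_inr h4 h
    simp only [gpDist]
    rcases Nat.mod_two_eq_zero_or_one (cycDist (a - p)) with _ | _ <;> omega

lemma exists_adj_gpDist_lt {x y : ZMod n ⊕ ZMod n} (hne : y ≠ x) :
    ∃ z, (GP n 2).Adj y z ∧ gpDist n x z < gpDist n x y := by
  rcases x with p | p <;> rcases y with a | a
  · have : 1 ≤ cycDist (a - p) := by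
      rw [Nat.one_le_iff_ne_zero, Ne, cycDist_eq_zero, sub_eq_zero]
      exact fun h => hne (congrArg inl h)
    by_cases hm : cycDist (a - p) < 5
    · obtain ⟨b, hab, hb⟩ := exists_adj_inl_cycDist_eq_sub this
      exact ⟨inl b, hab, by simp only [gpDist]; omega⟩
    · exact ⟨inr a, rfl, by simp only [gpDist]; omega⟩
  · by_cases hm : cycDist (a - p) < 2
    · exact ⟨inl a, rfl, by simp only [gpDist]; omega⟩
    · obtain ⟨b, hab, hb⟩ := exists_adj_inr_cycDist_eq_sub (not_lt.mp hm)
      exact ⟨inr b, hab, by simp only [gpDist]; omega⟩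
  · by_cases hm : cycDist (a - p) % 2 = 0
    · exact ⟨inr a, rfl, by simp only [gpDist]; omega⟩
    · obtain ⟨b, hab, hb⟩ :=
        exists_adj_inl_cycDist_eq_sub (c := 2) (p := p) (a := a) (by omega)
      exact ⟨inl b, hab, by simp only [gpDist]; omega⟩
  · have : cycDist (a - p) ≠ 0 := by
      rw [Ne, cycDist_eq_zero, sub_eq_zero]
      exact fun h => hne (congrArg inr h)
    by_cases hm : cycDist (a - p) % 2 = 1
    · exact ⟨inl a, rfl, by simp only [gpDist]; omega⟩
    · obtain ⟨b, hab, hb⟩ := exists_adj_inr_cycDist_eq_sub (p := p) (a := a) (by omega)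
      exact ⟨inr b, hab, by simp only [gpDist]; omega⟩

theorem dist_eq_gpDist (hn : Even n) (h4 : 4 ≤ n) (x y : ZMod n ⊕ ZMod n) :
    (GP n 2).dist x y = gpDist n x y :=
  dist_eq_of_lipschitz_of_descent (gpDist_self x) (fun _ _ h => gpDist_le_of_adj hn h4 x h)
    (fun _ h => exists_adj_gpDist_lt h) y

theorem connected_two : (GP n 2).Connected :=
  ⟨fun x y => (exists_walk_length_le_of_descent (x := x) (fun _ h => exists_adj_gpDist_lt h)
    y).elim fun p _ => p.reachable⟩

end Distance

section FourMul

variable {k : ℕ}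

lemma dist_four_mul (hk : 1 ≤ k) (x y : ZMod (4 * k) ⊕ ZMod (4 * k)) :
    (GP (4 * k) 2).dist x y = gpDist (4 * k) x y :=
  have : NeZero (4 * k) := ⟨by omega⟩
  dist_eq_gpDist ⟨2 * k, by ring⟩ (by omega) x y

lemma dist_le_of_adj_inl (hk : 5 ≤ k) {p a : ZMod (4 * k)}
    (h : cycDist (a - p) = 5 ∨ cycDist (a - p) = 2 * k - 5 ∨ cycDist (a - p) = 2 * k)
    (w : ZMod (4 * k) ⊕ ZMod (4 * k)) (hw : (GP (4 * k) 2).Adj (inl a) w) :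
    (GP (4 * k) 2).dist (inl p) w ≤ (GP (4 * k) 2).dist (inl p) (inl a) := by
  have : NeZero (4 * k) := ⟨by omega⟩
  have hn : Even (4 * k) := ⟨2 * k, by ring⟩
  rw [dist_four_mul (by omega), dist_four_mul (by omega)]
  rcases w with b | b
  · have := cycDist_sub_triangle hn p a b
    have := cycDist_sub_of_adj_inl (by omega) hw
    have := two_mul_cycDist_le (b - p)
    simp only [gpDist]
    omega
  · obtain rfl : a = b := hw
    simp only [gpDist]
    omega

lemma dist_le_of_adj_inr (hk : 5 ≤ k) {p a : ZMod (4 * k)} (h : cycDist (a - p) = 2 * k - 1)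
    (w : ZMod (4 * k) ⊕ ZMod (4 * k)) (hw : (GP (4 * k) 2).Adj (inr a) w) :
    (GP (4 * k) 2).dist (inr p) w ≤ (GP (4 * k) 2).dist (inr p) (inr a) := by
  have : NeZero (4 * k) := ⟨by omega⟩
  have hn : Even (4 * k) := ⟨2 * k, by ring⟩
  rw [dist_four_mul (by omega), dist_four_mul (by omega)]
  rcases w with b | b
  · obtain rfl : a = b := hw
    simp only [gpDist]
    omega
  · have := cycDist_sub_triangle hn p a b
    have := cycDist_sub_of_adj_inr (by omega) hw
    have := two_mul_cycDist_le (b - p)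
    simp only [gpDist]
    omega

lemma mutuallyMaximallyDistant_inl_inl (hk : 5 ≤ k) {i j : ZMod (4 * k)}
    (h : cycDist (j - i) = 5 ∨ cycDist (j - i) = 2 * k - 5 ∨ cycDist (j - i) = 2 * k) :
    MutuallyMaximallyDistant (GP (4 * k) 2) (inl i) (inl j) := by
  have : NeZero (4 * k) := ⟨by omega⟩
  refine .of_forall_adj (fun hij => ?_) (dist_le_of_adj_inl hk ?_) (dist_le_of_adj_inl hk h)
  · cases hij
    simp only [sub_self, cycDist_zero] at h
    omega
  · rwa [cycDist_sub_comm]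

lemma mutuallyMaximallyDistant_inr_inr (hk : 5 ≤ k) {i j : ZMod (4 * k)}
    (h : cycDist (j - i) = 2 * k - 1) :
    MutuallyMaximallyDistant (GP (4 * k) 2) (inr i) (inr j) := by
  have : NeZero (4 * k) := ⟨by omega⟩
  refine .of_forall_adj (fun hij => ?_) (dist_le_of_adj_inr hk ?_) (dist_le_of_adj_inr hk h)
  · cases hij
    simp only [sub_self, cycDist_zero] at h
    omega
  · rwa [cycDist_sub_comm]

lemma not_mutuallyMaximallyDistant_inl_inl (hk : 1 ≤ k) {i j : ZMod (4 * k)}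
    (heven : cycDist (j - i) % 2 = 0) (hlt : cycDist (j - i) < 2 * k) :
    ¬ MutuallyMaximallyDistant (GP (4 * k) 2) (inl i) (inl j) := by
  have : NeZero (4 * k) := ⟨by omega⟩
  rintro ⟨-, -, hj⟩
  obtain ⟨b, hjb, hb⟩ := exists_adj_inl_cycDist_eq_add (c := 2) (p := i) (a := j) (by omega)
  have := hj _ hjb
  simp only [dist_four_mul (by omega : 1 ≤ k), gpDist] at this
  omega

lemma not_mutuallyMaximallyDistant_inl_inr (hk : 2 ≤ k) {i j : ZMod (4 * k)}
    (heven : cycDist (j - i) % 2 = 0) :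
    ¬ MutuallyMaximallyDistant (GP (4 * k) 2) (inl i) (inr j) := by
  have : NeZero (4 * k) := ⟨by omega⟩
  rintro ⟨-, -, hj⟩
  by_cases hm : 2 * (cycDist (j - i) + 2) ≤ 4 * k
  · obtain ⟨b, hjb, hb⟩ := exists_adj_inr_cycDist_eq_add hm
    have := hj _ hjb
    simp only [dist_four_mul (by omega : 1 ≤ k), gpDist] at this
    omega
  · have := two_mul_cycDist_le (j - i)
    have := hj (inl j) rfl
    simp only [dist_four_mul (by omega : 1 ≤ k), gpDist] at this
    omega

lemma not_mutuallyMaximallyDistant_inr_inr (hk : 1 ≤ k) {i j : ZMod (4 * k)}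
    (heven : cycDist (j - i) % 2 = 0) :
    ¬ MutuallyMaximallyDistant (GP (4 * k) 2) (inr i) (inr j) := by
  have : NeZero (4 * k) := ⟨by omega⟩
  rintro ⟨-, -, hj⟩
  by_cases hm : 2 * (cycDist (j - i) + 2) ≤ 4 * k
  · obtain ⟨b, hjb, hb⟩ := exists_adj_inr_cycDist_eq_add hm
    have := hj _ hjb
    simp only [dist_four_mul (by omega : 1 ≤ k), gpDist] at this
    omega
  · have := two_mul_cycDist_le (j - i)
    have := hj (inl j) rfl
    simp only [dist_four_mul (by omega : 1 ≤ k), gpDist] at this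
    omega

def evenVertex (k : ℕ) : Fin k ⊕ Fin (2 * k) → ZMod (4 * k) ⊕ ZMod (4 * k) :=
  Sum.map (fun t => ((2 * t : ℕ) : ZMod (4 * k))) (fun t => ((2 * t : ℕ) : ZMod (4 * k)))

def mmdClique (k : ℕ) : Fin k ⊕ Fin (2 * k) → Set (ZMod (4 * k) ⊕ ZMod (4 * k))
  | inl t => (fun s : ℕ => inl ((2 * t + s : ℕ) : ZMod (4 * k))) '' {0, 5, 2 * k, 2 * k + 5}
  | inr t => (fun s : ℕ => inr ((2 * t + s : ℕ) : ZMod (4 * k))) '' {0, 2 * k + 1}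

lemma evenVertex_injective (k : ℕ) : Injective (evenVertex k) := by
  refine Injective.sumMap (fun s t h => ?_) (fun s t h => ?_) <;>
  · have := s.isLt
    have := t.isLt
    have h := congrArg ZMod.val h
    rw [ZMod.val_natCast_of_lt (by omega), ZMod.val_natCast_of_lt (by omega)] at h
    exact Fin.ext (by omega)

lemma pairwise_not_mutuallyMaximallyDistant_evenVertex (hk : 2 ≤ k) :
    Pairwise fun s t =>
      ¬ MutuallyMaximallyDistant (GP (4 * k) 2) (evenVertex k s) (evenVertex k t) := by
  have : NeZero (4 * k) := ⟨by omega⟩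
  rintro (s | s) (t | t) - <;> have := s.isLt <;> have := t.isLt <;>
    have hst := cycDist_natCast_sub_natCast (n := 4 * k) (a := 2 * s) (b := 2 * t)
      (by omega) (by omega) <;>
    simp only [evenVertex, Sum.map_inl, Sum.map_inr]
  · exact not_mutuallyMaximallyDistant_inl_inl (by omega) (by omega) (by omega)
  · exact not_mutuallyMaximallyDistant_inl_inr hk (by omega)
  · have hts := cycDist_natCast_sub_natCast (n := 4 * k) (a := 2 * t) (b := 2 * s)
      (by omega) (by omega)
    exact fun h => not_mutuallyMaximallyDistant_inl_inr hk (by omega) h.symm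
  · exact not_mutuallyMaximallyDistant_inr_inr (by omega) (by omega)

lemma pairwise_mutuallyMaximallyDistant_mmdClique (hk : 5 ≤ k) (t : Fin k ⊕ Fin (2 * k)) :
    (mmdClique k t).Pairwise (MutuallyMaximallyDistant (GP (4 * k) 2)) := by
  have : NeZero (4 * k) := ⟨by omega⟩
  have hsub (t s s' : ℕ) :
      ((2 * t + s' : ℕ) : ZMod (4 * k)) - ((2 * t + s : ℕ) : ZMod (4 * k)) =
        (s' : ZMod (4 * k)) - (s : ZMod (4 * k)) := by
    push_cast; ring
  rcases t with t | t <;> rintro _ ⟨s, hs, rfl⟩ _ ⟨s', hs', rfl⟩ hne <;>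
    simp only [Set.mem_insert_iff, Set.mem_singleton_iff] at hs hs'
  · apply mutuallyMaximallyDistant_inl_inl hk
    rw [hsub, cycDist_natCast_sub_natCast (by omega) (by omega)]
    rcases hs with rfl | rfl | rfl | rfl <;> rcases hs' with rfl | rfl | rfl | rfl <;>
      first | exact absurd rfl hne | omega
  · apply mutuallyMaximallyDistant_inr_inr hk
    rw [hsub, cycDist_natCast_sub_natCast (by omega) (by omega)]
    rcases hs with rfl | rfl <;> rcases hs' with rfl | rfl <;>
      first | exact absurd rfl hne | omega

lemma exists_mem_mmdClique (hk : 5 ≤ k) (x : ZMod (4 * k) ⊕ ZMod (4 * k)) :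
    ∃ t, x ∈ mmdClique k t := by
  have : NeZero (4 * k) := ⟨by omega⟩
  have hcast (i : ZMod (4 * k)) (m : ℕ) (h : m = i.val ∨ m = i.val + 4 * k) :
      (m : ZMod (4 * k)) = i := by
    rcases h with rfl | rfl <;> simp
  rcases x with i | i <;> have := i.val_lt
  · obtain ⟨t, ht, s, hs, h⟩ : ∃ t < k, ∃ s,
        (s = 0 ∨ s = 5 ∨ s = 2 * k ∨ s = 2 * k + 5) ∧
          (2 * t + s = i.val ∨ 2 * t + s = i.val + 4 * k) := by
      rcases Nat.even_or_odd' i.val with ⟨r, hr | hr⟩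
      · by_cases hr' : r < k
        · exact ⟨r, hr', 0, by omega, by omega⟩
        · exact ⟨r - k, by omega, 2 * k, by omega, by omega⟩
      · by_cases hr' : r < 2
        · exact ⟨r + k - 2, by omega, 2 * k + 5, by omega, by omega⟩
        by_cases hr'' : r < k + 2
        · exact ⟨r - 2, by omega, 5, by omega, by omega⟩
        · exact ⟨r - k - 2, by omega, 2 * k + 5, by omega, by omega⟩
    exact ⟨inl ⟨t, ht⟩, s, by simpa using hs, congrArg inl (hcast i _ h)⟩
  · obtain ⟨t, ht, s, hs, h⟩ : ∃ t < 2 * k, ∃ s, (s = 0 ∨ s = 2 * k + 1) ∧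
        (2 * t + s = i.val ∨ 2 * t + s = i.val + 4 * k) := by
      rcases Nat.even_or_odd' i.val with ⟨r, hr | hr⟩
      · exact ⟨r, by omega, 0, by omega, by omega⟩
      · by_cases hr' : r < k
        · exact ⟨r + k, by omega, 2 * k + 1, by omega, by omega⟩
        · exact ⟨r - k, by omega, 2 * k + 1, by omega, by omega⟩
    exact ⟨inr ⟨t, ht⟩, s, by simpa using hs, congrArg inr (hcast i _ h)⟩

end FourMul

end GP

/-- For `k ≥ 5`, `sdim (GP (4k) 2) = 5k`. -/
theorem stmt_13 (k : ℕ) (hk : 5 ≤ k) : sdim (GP (4*k) 2) = 5*k := by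
  have : NeZero (4 * k) := ⟨by omega⟩
  have h := sdim_add_card_eq GP.connected_two (GP.evenVertex_injective k)
    (GP.pairwise_not_mutuallyMaximallyDistant_evenVertex (by omega))
    (GP.pairwise_mutuallyMaximallyDistant_mmdClique hk) (GP.exists_mem_mmdClique hk)
  simp only [Nat.card_sum, Nat.card_fin, Nat.card_zmod] at h
  omega
end

section
/- In the generalized Petersen graph GP(4k+2,2) with k ≥ 3 and odd indices i < j with j − i ≤ 2k, the vertex u_{i−1} strongly resolves the pair (u_i, u_j); in particular, u_{i−1}, u_i, v_i, v_{i+2}, …, v_j, u_j is a shortest u_{i−1}–u_j path when 4 ≤ j − i ≤ 2k. -/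
/-!
Fix `a` and write `c` for the cyclic distance from `a` to `z`. The function giving `u_z` the
value `min c ⌊(c + 5) / 2⌋` and `v_z` the value `⌊(c + 3) / 2⌋` vanishes at `u_a` and changes by at
most one along every edge of GP(n,2), so it is a lower bound for the distance from `u_a`. The walk
along the outer rim and the walk `u_a, v_a, v_{a+2}, …` through the inner cycle (preceded by one rim
step when `c` is odd) attain it, hence `d(u_a, u_{a+c}) = min c ⌊(c + 5) / 2⌋` whenever `2c ≤ n`.
For odd `i < j` the difference `j - i` is even, and the formula gives
`d(u_{i-1}, u_j) = 1 + d(u_i, u_j)`; once `j - i ≥ 4` it is attained by `u_{i-1}` followed by the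
inner walk from `u_i`.
-/

open SimpleGraph Sum

namespace ZMod

variable {n : ℕ}

lemma natAbs_valMinAbs_natCast_le (m : ℕ) : (m : ZMod n).valMinAbs.natAbs ≤ m := by
  rcases eq_zero_or_neZero n with rfl | _
  · exact (Int.natAbs_natCast m).le
  by_cases hm : m ≤ n / 2
  · rw [valMinAbs_natCast_of_le_half hm, Int.natAbs_natCast]
  · exact (natAbs_valMinAbs_le _).trans (by omega)

lemma natAbs_valMinAbs_sub_le (a x y : ZMod n) :
    (y - a).valMinAbs.natAbs ≤ (x - a).valMinAbs.natAbs + (y - x).valMinAbs.natAbs :=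
  calc (y - a).valMinAbs.natAbs = ((x - a) + (y - x)).valMinAbs.natAbs := by
        rw [sub_add_sub_cancel']
    _ ≤ ((x - a).valMinAbs + (y - x).valMinAbs).natAbs := natAbs_valMinAbs_add_le _ _
    _ ≤ _ := Int.natAbs_add_le _ _

lemma natAbs_valMinAbs_sub_le_of_eq_add {x y : ZMod n} {m : ℕ} (h : y = x + m ∨ x = y + m) :
    (y - x).valMinAbs.natAbs ≤ m := by
  rcases h with rfl | rfl
  · simpa using natAbs_valMinAbs_natCast_le m
  · rw [← natAbs_valMinAbs_neg, neg_sub]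
    simpa using natAbs_valMinAbs_natCast_le m

lemma natCast_ne_zero_of_lt {m : ℕ} (h0 : 0 < m) (hm : m < n) : (m : ZMod n) ≠ 0 := by
  rw [Ne, natCast_eq_zero_iff]
  exact fun h => absurd (Nat.le_of_dvd h0 h) (by omega)

end ZMod

namespace SimpleGraph

variable {V : Type*} {G : SimpleGraph V}

lemma Walk.le_add_length_of_forall_adj (f : V → ℕ) (hf : ∀ x y, G.Adj x y → f y ≤ f x + 1)
    {u v : V} (p : G.Walk u v) : f v ≤ f u + p.length := by
  induction p with
  | nil => simp
  | cons h _ ih =>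
    have := hf _ _ h
    rw [Walk.length_cons]
    omega

lemma Reachable.le_add_dist_of_forall_adj (f : V → ℕ) (hf : ∀ x y, G.Adj x y → f y ≤ f x + 1)
    {u v : V} (h : G.Reachable u v) : f v ≤ f u + G.dist u v := by
  obtain ⟨p, hp⟩ := h.exists_walk_length_eq_dist
  exact hp ▸ p.le_add_length_of_forall_adj f hf

def Walk.ofAdjSeq (f : ℕ → V) (hf : ∀ t, G.Adj (f t) (f (t + 1))) :
    (t : ℕ) → G.Walk (f 0) (f t)
  | 0 => nil
  | t + 1 => (ofAdjSeq f hf t).concat (hf t)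

@[simp]
lemma Walk.length_ofAdjSeq (f : ℕ → V) (hf : ∀ t, G.Adj (f t) (f (t + 1))) (t : ℕ) :
    (ofAdjSeq f hf t).length = t := by
  induction t with
  | zero => rfl
  | succ t ih => simp [ofAdjSeq, ih]

@[simp]
lemma Walk.support_ofAdjSeq (f : ℕ → V) (hf : ∀ t, G.Adj (f t) (f (t + 1))) (t : ℕ) :
    (ofAdjSeq f hf t).support = (List.range (t + 1)).map f := by
  induction t with
  | zero => rfl
  | succ t ih => simp [ofAdjSeq, ih, List.range_succ (n := t + 1)]

end SimpleGraph

namespace GP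

variable {n : ℕ}

lemma adj_inl_natCast_succ (s : ℕ) (hn : 1 < n) (m : ℕ) :
    (GP n s).Adj (inl (m : ZMod n)) (inl ((m + 1 : ℕ) : ZMod n)) := by
  refine ⟨fun h => ZMod.natCast_ne_zero_of_lt one_pos hn ?_, Or.inl (by push_cast; rfl)⟩
  simpa using h

lemma adj_inr_natCast_add {s : ℕ} (hs : 0 < s) (hn : s < n) (m : ℕ) :
    (GP n s).Adj (inr (m : ZMod n)) (inr ((m + s : ℕ) : ZMod n)) := by
  refine ⟨fun h => ZMod.natCast_ne_zero_of_lt hs hn ?_, Or.inl (by push_cast; rfl)⟩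
  simpa using h

lemma adj_inl_inr_iff {s : ℕ} {z w : ZMod n} : (GP n s).Adj (inl z) (inr w) ↔ z = w := Iff.rfl

lemma adj_inr_inl_iff {s : ℕ} {z w : ZMod n} : (GP n s).Adj (inr z) (inl w) ↔ z = w := Iff.rfl

def potential (n : ℕ) (a : ZMod n) : ZMod n ⊕ ZMod n → ℕ
  | inl z => min (z - a).valMinAbs.natAbs (((z - a).valMinAbs.natAbs + 5) / 2)
  | inr z => ((z - a).valMinAbs.natAbs + 3) / 2

lemma potential_le_of_adj (a : ZMod n) {x y : ZMod n ⊕ ZMod n} (h : (GP n 2).Adj x y) :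
    potential n a y ≤ potential n a x + 1 := by
  rcases x with z | z <;> rcases y with z' | z' <;> simp only [potential]
  · have hz : (z' - z).valMinAbs.natAbs ≤ 1 :=
      ZMod.natAbs_valMinAbs_sub_le_of_eq_add (m := 1) (by simpa using h.2)
    have := ZMod.natAbs_valMinAbs_sub_le a z z'
    omega
  · obtain rfl : z = z' := h
    omega
  · obtain rfl : z = z' := h
    omega
  · have hz : (z' - z).valMinAbs.natAbs ≤ 2 := ZMod.natAbs_valMinAbs_sub_le_of_eq_add h.2
    have := ZMod.natAbs_valMinAbs_sub_le a z z'
    omega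

lemma potential_le_dist (a : ZMod n) {y : ZMod n ⊕ ZMod n} (h : (GP n 2).Reachable (inl a) y) :
    potential n a y ≤ (GP n 2).dist (inl a) y := by
  simpa [potential] using
    h.le_add_dist_of_forall_adj (potential n a) fun _ _ => potential_le_of_adj a

def outerWalk (s : ℕ) (hn : 1 < n) (a t : ℕ) :
    (GP n s).Walk (inl (a : ZMod n)) (inl ((a + t : ℕ) : ZMod n)) :=
  Walk.ofAdjSeq (fun t => inl ((a + t : ℕ) : ZMod n))
    (fun t => adj_inl_natCast_succ s hn (a + t)) t

def innerWalk (hn : 2 < n) (a m : ℕ) :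
    (GP n 2).Walk (inl (a : ZMod n)) (inl ((a + 2 * m : ℕ) : ZMod n)) :=
  Walk.cons (adj_inl_inr_iff.2 (by rw [mul_zero, add_zero])) <|
    (Walk.ofAdjSeq (fun t => inr ((a + 2 * t : ℕ) : ZMod n))
      (fun t => adj_inr_natCast_add two_pos hn (a + 2 * t)) m).concat (adj_inr_inl_iff.2 rfl)

@[simp]
lemma length_innerWalk (hn : 2 < n) (a m : ℕ) : (innerWalk hn a m).length = m + 2 := by
  simp only [innerWalk, Walk.length_cons, Walk.length_concat, Walk.length_ofAdjSeq]

@[simp]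
lemma support_innerWalk (hn : 2 < n) (a m : ℕ) :
    (innerWalk hn a m).support = inl (a : ZMod n) ::
      ((List.range (m + 1)).map (fun t => inr ((a + 2 * t : ℕ) : ZMod n)) ++
        [inl ((a + 2 * m : ℕ) : ZMod n)]) := by
  simp only [innerWalk, Walk.support_cons, Walk.support_concat, Walk.support_ofAdjSeq]

theorem dist_inl_natCast (hn : 2 < n) {a b : ℕ} (hab : a ≤ b) (hba : 2 * (b - a) ≤ n) :
    (GP n 2).dist (inl (a : ZMod n)) (inl (b : ZMod n)) = min (b - a) ((b - a + 5) / 2) := by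
  obtain ⟨t, rfl⟩ := Nat.exists_eq_add_of_le hab
  rw [Nat.add_sub_cancel_left] at hba ⊢
  have hout := (GP n 2).dist_le (outerWalk 2 (by omega) a t)
  simp only [outerWalk, Walk.length_ofAdjSeq] at hout
  refine le_antisymm ?_ ?_
  · obtain ⟨m, rfl | rfl⟩ := Nat.even_or_odd' t
    · have := (GP n 2).dist_le (innerWalk hn a m)
      simp only [length_innerWalk] at this
      omega
    · have := (GP n 2).dist_le <| (Walk.cons (adj_inl_natCast_succ 2 (by omega) a)
        (innerWalk hn (a + 1) m)).copy rfl (by rw [Nat.add_right_comm, add_assoc])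
      simp only [Walk.length_copy, Walk.length_cons, length_innerWalk] at this
      omega
  · have hc : (((a + t : ℕ) : ZMod n) - a).valMinAbs.natAbs = t := by
      rw [Nat.cast_add, add_sub_cancel_left, ZMod.valMinAbs_natCast_of_le_half (by omega),
        Int.natAbs_natCast]
    have := potential_le_dist (a : ZMod n) (outerWalk 2 (by omega) a t).reachable
    simp only [potential, hc] at this
    omega

end GP

theorem stmt_18_general (k i j : ℕ) (hi : Odd i) (hj : Odd j) (hij : i < j)
    (hle : j - i ≤ 2*k) :
    StronglyResolves (GP (4*k+2) 2) (Sum.inl ((i - 1 : ℕ) : ZMod (4*k+2)))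
      (Sum.inl ((i : ℕ) : ZMod (4*k+2))) (Sum.inl ((j : ℕ) : ZMod (4*k+2))) ∧
    (4 ≤ j - i →
      ∃ p : (GP (4*k+2) 2).Walk (Sum.inl ((i - 1 : ℕ) : ZMod (4*k+2)))
          (Sum.inl ((j : ℕ) : ZMod (4*k+2))),
        p.length = (GP (4*k+2) 2).dist (Sum.inl ((i - 1 : ℕ) : ZMod (4*k+2)))
          (Sum.inl ((j : ℕ) : ZMod (4*k+2))) ∧
        p.support = [Sum.inl ((i - 1 : ℕ) : ZMod (4*k+2)), Sum.inl ((i : ℕ) : ZMod (4*k+2))] ++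
          ((List.range ((j - i)/2 + 1)).map
            (fun t => Sum.inr ((i + 2*t : ℕ) : ZMod (4*k+2)))) ++
          [Sum.inl ((j : ℕ) : ZMod (4*k+2))]) := by
  rw [Nat.odd_iff] at hi hj
  have hn : 2 < 4 * k + 2 := by omega
  have hwu : (GP (4*k+2) 2).Adj (inl ((i - 1 : ℕ) : ZMod (4*k+2))) (inl (i : ZMod (4*k+2))) := by
    simpa [Nat.sub_add_cancel (show 1 ≤ i by omega)] using
      GP.adj_inl_natCast_succ 2 (by omega) (i - 1)
  have hdwu := dist_eq_one_iff_adj.mpr hwu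
  have hdu := GP.dist_inl_natCast hn hij.le (by omega)
  have hdw := GP.dist_inl_natCast hn (show i - 1 ≤ j by omega) (by omega)
  refine ⟨Or.inr (by omega), fun h4 => ?_⟩
  have hj' : i + 2 * ((j - i) / 2) = j := by omega
  refine ⟨(Walk.cons hwu (GP.innerWalk hn i ((j - i) / 2))).copy rfl (by rw [hj']), ?_, ?_⟩
  · simp only [Walk.length_copy, Walk.length_cons, GP.length_innerWalk]
    omega
  · simp [hj']

/-- In `GP (4k+2) 2` with `k ≥ 3` and odd `i < j` with `j − i ≤ 2k`, the vertex
`u_{i−1}` strongly resolves `(uᵢ, uⱼ)`; in particular, when `4 ≤ j − i`, the walk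
`u_{i−1}, uᵢ, vᵢ, v_{i+2}, …, vⱼ, uⱼ` is a shortest `u_{i−1}`–`uⱼ` path. -/
theorem stmt_18 (k i j : ℕ) (hk : 3 ≤ k) (hi : Odd i) (hj : Odd j) (hij : i < j)
    (hle : j - i ≤ 2*k) :
    StronglyResolves (GP (4*k+2) 2) (Sum.inl ((i - 1 : ℕ) : ZMod (4*k+2)))
      (Sum.inl ((i : ℕ) : ZMod (4*k+2))) (Sum.inl ((j : ℕ) : ZMod (4*k+2))) ∧
    (4 ≤ j - i →
      ∃ p : (GP (4*k+2) 2).Walk (Sum.inl ((i - 1 : ℕ) : ZMod (4*k+2)))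
          (Sum.inl ((j : ℕ) : ZMod (4*k+2))),
        p.length = (GP (4*k+2) 2).dist (Sum.inl ((i - 1 : ℕ) : ZMod (4*k+2)))
          (Sum.inl ((j : ℕ) : ZMod (4*k+2))) ∧
        p.support = [Sum.inl ((i - 1 : ℕ) : ZMod (4*k+2)), Sum.inl ((i : ℕ) : ZMod (4*k+2))] ++
          ((List.range ((j - i)/2 + 1)).map
            (fun t => Sum.inr ((i + 2*t : ℕ) : ZMod (4*k+2)))) ++
          [Sum.inl ((j : ℕ) : ZMod (4*k+2))]) :=
  stmt_18_general k i j hi hj hij hle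
end
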